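/- Let d ∈ {1,2}, let Q : ℝᵈ → ℝ be continuous with 0 < Q(y) ≤ C e^{−δ|y|} for some C, δ > 0, and let z : ℝᵈ → ℂ be bounded with |z(x)| ≤ C₀(|x − x₀|^{m'} + τ) for |x − x₀| < 1 and some m' ∈ ℕ, τ ≥ 0, C₀ > 0. Let λ ∈ (0,1], α ∈ ℝᵈ with |α − x₀| ≤ λ. Then there is a constant C' (depending on C, δ, C₀, m', d but not on λ, τ) such that sup_y e^{−δ|y|/2} |z(λy + α)| ≤ C' (λ^{m'} + τ + e^{−δ'/λ}) for some δ' > 0. -/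

import Mathlib

/-!
Write `x = λy + α`, so that `‖x - x₀‖ ≤ λ(‖y‖ + 1)`. Near `x₀` the flatness of `z` gives
`|z x| ≲ λ^{m'}(‖y‖ + 1)^{m'} + τ`, and the weight `e^{-δ‖y‖/2}` absorbs the polynomial factor.
Away from `x₀` we have `‖y‖ ≥ 1/λ - 1`, so the weight alone is `≤ e^{δ/2} e^{-δ/(2λ)}`, while `z`
is bounded.
-/

open Real

theorem add_one_pow_mul_exp_neg_le {c : ℝ} (hc : 0 < c) (m : ℕ) {t : ℝ} (ht : 0 ≤ t) :
    (t + 1) ^ m * exp (-c * t) ≤ m.factorial / c ^ m * exp c := by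
  have hfact : (0 : ℝ) < m.factorial := by exact_mod_cast m.factorial_pos
  have hpow : (c * (t + 1)) ^ m / m.factorial ≤ exp (c * (t + 1)) :=
    pow_div_factorial_le_exp _ (by positivity) m
  rw [div_le_iff₀ hfact, mul_pow] at hpow
  have hexp : exp (c * (t + 1)) * exp (-c * t) = exp c := by
    rw [← exp_add]; ring_nf
  calc (t + 1) ^ m * exp (-c * t)
      = c ^ m * (t + 1) ^ m / c ^ m * exp (-c * t) := by field_simp
    _ ≤ exp (c * (t + 1)) * m.factorial / c ^ m * exp (-c * t) := by gcongr
    _ = m.factorial / c ^ m * exp c := by rw [← hexp]; ring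

theorem exp_neg_mul_le_of_one_le_mul_add_one {c lam t : ℝ} (hc : 0 ≤ c) (hlam : 0 < lam)
    (h : 1 ≤ lam * (t + 1)) : exp (-c * t) ≤ exp c * exp (-c / lam) := by
  have ht : 1 / lam ≤ t + 1 := by
    rwa [div_le_iff₀ hlam, mul_comm]
  rw [← exp_add, exp_le_exp, neg_div, ← mul_one_div]
  nlinarith

section Rescaling

variable {E F : Type*} [SeminormedAddCommGroup E] [SeminormedAddCommGroup F]

theorem exp_neg_mul_mul_norm_le_of_flat {c C₀ τ lam t : ℝ} (hc : 0 < c) (hC₀ : 0 ≤ C₀)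
    (hτ : 0 ≤ τ) (hlam : 0 ≤ lam) (ht : 0 ≤ t) (m : ℕ) {z : E → F} {x x₀ : E}
    (hx : ‖x - x₀‖ ≤ lam * (t + 1)) (hz : ‖z x‖ ≤ C₀ * (‖x - x₀‖ ^ m + τ)) :
    exp (-c * t) * ‖z x‖ ≤ C₀ * (m.factorial / c ^ m * exp c * lam ^ m + τ) := by
  have hweight_le_one : exp (-c * t) ≤ 1 := by
    rw [exp_le_one_iff]; nlinarith
  have hpoly := add_one_pow_mul_exp_neg_le hc m ht
  calc exp (-c * t) * ‖z x‖
      ≤ exp (-c * t) * (C₀ * ((lam * (t + 1)) ^ m + τ)) := by gcongr; exact hz.trans (by gcongr)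
    _ = C₀ * (lam ^ m * ((t + 1) ^ m * exp (-c * t)) + τ * exp (-c * t)) := by
      rw [mul_pow]; ring
    _ ≤ C₀ * (lam ^ m * (m.factorial / c ^ m * exp c) + τ * 1) := by gcongr
    _ = C₀ * (m.factorial / c ^ m * exp c * lam ^ m + τ) := by ring

variable [NormedSpace ℝ E]

theorem norm_smul_add_sub_le {lam : ℝ} (hlam : 0 ≤ lam) (y : E) {α x₀ : E}
    (hα : ‖α - x₀‖ ≤ lam) : ‖lam • y + α - x₀‖ ≤ lam * (‖y‖ + 1) :=
  calc ‖lam • y + α - x₀‖ = ‖lam • y + (α - x₀)‖ := by rw [add_sub_assoc]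
    _ ≤ ‖lam • y‖ + ‖α - x₀‖ := norm_add_le _ _
    _ ≤ lam * ‖y‖ + lam := by rw [norm_smul, norm_of_nonneg hlam]; linarith
    _ = lam * (‖y‖ + 1) := by ring

theorem exp_neg_mul_norm_mul_norm_comp_smul_add_le {c C₀ τ lam : ℝ} (hc : 0 < c)
    (hC₀ : 0 ≤ C₀) (hτ : 0 ≤ τ) (hlam : 0 < lam) (m : ℕ) {z : E → F} {α x₀ : E}
    (hα : ‖α - x₀‖ ≤ lam) (hz_bdd : ∀ x, ‖z x‖ ≤ C₀)
    (hz_flat : ∀ x, ‖x - x₀‖ < 1 → ‖z x‖ ≤ C₀ * (‖x - x₀‖ ^ m + τ)) (y : E) :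
    exp (-c * ‖y‖) * ‖z (lam • y + α)‖ ≤
      C₀ * (m.factorial / c ^ m * exp c + 1 + exp c) * (lam ^ m + τ + exp (-c / lam)) := by
  set M : ℝ := m.factorial / c ^ m * exp c
  have hM : 0 ≤ M := by positivity
  have hdist := norm_smul_add_sub_le hlam.le y hα
  have hE : 0 ≤ exp (-c / lam) := (exp_pos _).le
  rcases lt_or_ge ‖lam • y + α - x₀‖ 1 with hnear | hfar
  · have hbound := exp_neg_mul_mul_norm_le_of_flat hc hC₀ hτ hlam.le (norm_nonneg y) m hdist
      (hz_flat _ hnear)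
    refine hbound.trans ?_
    rw [mul_assoc C₀]
    gcongr C₀ * ?_
    nlinarith [exp_pos c, pow_nonneg hlam.le m]
  · have hweight := exp_neg_mul_le_of_one_le_mul_add_one hc.le hlam (hfar.trans hdist)
    calc exp (-c * ‖y‖) * ‖z (lam • y + α)‖
        ≤ exp c * exp (-c / lam) * C₀ := by gcongr; exact hz_bdd _
      _ ≤ C₀ * (M + 1 + exp c) * (lam ^ m + τ + exp (-c / lam)) := by
        rw [mul_comm, mul_assoc]
        gcongr C₀ * ?_
        nlinarith [exp_pos c, pow_nonneg hlam.le m]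

end Rescaling

theorem flat_residue_renormalized_bound_general (d : ℕ)
    (C δ C₀ : ℝ) (m' : ℕ) (x₀ : EuclideanSpace ℝ (Fin d))
    (hδ : 0 < δ) (hC₀ : 0 < C₀) :
    ∃ C' δ' : ℝ, 0 < C' ∧ 0 < δ' ∧
      ∀ (Q : EuclideanSpace ℝ (Fin d) → ℝ) (z : EuclideanSpace ℝ (Fin d) → ℂ)
        (τ lam : ℝ) (α : EuclideanSpace ℝ (Fin d)),
        Continuous Q →
        (∀ y, 0 < Q y ∧ Q y ≤ C * Real.exp (-δ * ‖y‖)) →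
        0 ≤ τ → 0 < lam → lam ≤ 1 → ‖α - x₀‖ ≤ lam →
        (∀ x, ‖z x‖ ≤ C₀) →
        (∀ x, ‖x - x₀‖ < 1 → ‖z x‖ ≤ C₀ * (‖x - x₀‖ ^ m' + τ)) →
        ∀ y : EuclideanSpace ℝ (Fin d),
          Real.exp (-δ * ‖y‖ / 2) * ‖z (lam • y + α)‖
            ≤ C' * (lam ^ m' + τ + Real.exp (-δ' / lam)) := by
  have hc : 0 < δ / 2 := by positivity
  refine ⟨C₀ * (m'.factorial / (δ / 2) ^ m' * exp (δ / 2) + 1 + exp (δ / 2)), δ / 2,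
    by positivity, hc, ?_⟩
  intro Q z τ lam α _ _ hτ hlam _ hα hz_bdd hz_flat y
  rw [show -δ * ‖y‖ / 2 = -(δ / 2) * ‖y‖ by ring]
  exact exp_neg_mul_norm_mul_norm_comp_smul_add_le hc hC₀.le hτ hlam m' hα hz_bdd hz_flat y

/-- a function `z` flat of order `m'` at `x₀` (up to an error `τ`) is small
in the concentration parameter `λ`, uniformly against an exponentially decaying weight:
`sup_y e^{−δ|y|/2}|z(λy+α)| ≤ C'(λ^{m'} + τ + e^{−δ'/λ})`,
with `C', δ'` independent of `λ, τ, α, z`. -/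
theorem flat_residue_renormalized_bound (d : ℕ) (hd : d = 1 ∨ d = 2)
    (C δ C₀ : ℝ) (m' : ℕ) (x₀ : EuclideanSpace ℝ (Fin d))
    (hC : 0 < C) (hδ : 0 < δ) (hC₀ : 0 < C₀) :
    ∃ C' δ' : ℝ, 0 < C' ∧ 0 < δ' ∧
      ∀ (Q : EuclideanSpace ℝ (Fin d) → ℝ) (z : EuclideanSpace ℝ (Fin d) → ℂ)
        (τ lam : ℝ) (α : EuclideanSpace ℝ (Fin d)),
        Continuous Q →
        (∀ y, 0 < Q y ∧ Q y ≤ C * Real.exp (-δ * ‖y‖)) →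
        0 ≤ τ → 0 < lam → lam ≤ 1 → ‖α - x₀‖ ≤ lam →
        (∀ x, ‖z x‖ ≤ C₀) →
        (∀ x, ‖x - x₀‖ < 1 → ‖z x‖ ≤ C₀ * (‖x - x₀‖ ^ m' + τ)) →
        ∀ y : EuclideanSpace ℝ (Fin d),
          Real.exp (-δ * ‖y‖ / 2) * ‖z (lam • y + α)‖
            ≤ C' * (lam ^ m' + τ + Real.exp (-δ' / lam)) :=
  flat_residue_renormalized_bound_general d C δ C₀ m' x₀ hδ hC₀
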